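/- arXiv:2203.01241 — 3 statements merged into one kernel-verified Lean document; each statement's English description precedes it below -/
import Mathlib

section
/- Let f be a normalized non-decreasing submodular function on the subsets of a finite ground set V. Let v_1, …, v_m be distinct items and, for each i, let I_{v_i} ⊆ V be a set such that {v_1, …, v_{i−1}} ∩ I ⊆ I_{v_i}, where I = {v_1, …, v_m}. Define val(v_i) = f(v_i | I_{v_i}). Then val(I) = Σ_{i=1}^m val(v_i) ≤ f(I). In particular, for the exchange streaming algorithm, whose final solution I consists of items v each assigned weight val(v) = f(v | I_v) where I_v is the tentative solution just before v was inserted (and every item of I inserted before v remains in the solution when v is inserted), it holds val(I) ≤ f(I). -/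
/-- **Lemma (val(I) ≤ f(I)).**  Let `f` be a normalized non-decreasing
submodular function on the subsets of a finite ground set `V`.  Let
`v 1, …, v m` be distinct items and, for each `i`, let `Iv i ⊆ V` be a set
containing `{v 1, …, v (i-1)} ∩ I`, where `I = {v 1, …, v m}`.  Assigning to
`v i` the weight `val (v i) = f(v i | Iv i)`, the total weight satisfies
`val(I) = ∑ i, val (v i) ≤ f(I)`. -/
theorem val_le_f_of_prefix_subsets
    {V : Type*} [DecidableEq V] [Fintype V]
    (f : Finset V → ℝ)
    (hf_norm : f ∅ = 0) (hf_nonneg : ∀ X : Finset V, 0 ≤ f X)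
    (hf_mono : ∀ ⦃X Y : Finset V⦄, X ⊆ Y → f X ≤ f Y)
    (hf_submod : ∀ ⦃X Y : Finset V⦄, X ⊆ Y → ∀ v ∉ Y,
      f (insert v Y) - f Y ≤ f (insert v X) - f X)
    {m : ℕ} (v : Fin m → V) (hv : Function.Injective v)
    (Iv : Fin m → Finset V)
    (hIv : ∀ i : Fin m,
      ((Finset.univ.filter fun j : Fin m => j < i).image v) ∩ (Finset.univ.image v)
        ⊆ Iv i) :
    ∑ i : Fin m, (f (insert (v i) (Iv i)) - f (Iv i)) ≤ f (Finset.univ.image v) := by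
  classical
  set P : ℕ → Finset V := fun k => (Finset.univ.filter fun j : Fin m => (j : ℕ) < k).image v
    with hP
  have hP0 : P 0 = ∅ := by simp [hP]
  have hPm : P m = Finset.univ.image v := by
    simp [hP, Finset.filter_true_of_mem, fun j : Fin m => j.isLt]
  have hPsucc : ∀ i : Fin m, insert (v i) (P i) = P (i + 1) := by
    intro i
    ext x
    simp only [hP, Finset.mem_insert, Finset.mem_image, Finset.mem_filter, Finset.mem_univ,
      true_and]
    constructor
    · rintro (rfl | ⟨j, hj, rfl⟩)
      · exact ⟨i, by omega, rfl⟩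
      · exact ⟨j, by omega, rfl⟩
    · rintro ⟨j, hj, rfl⟩
      rcases eq_or_lt_of_le (Nat.lt_succ_iff.mp hj) with h | h
      · left; congr 1; exact Fin.ext h
      · right; exact ⟨j, h, rfl⟩
  have hPsub : ∀ i : Fin m, P i ⊆ Iv i := by
    intro i
    intro x hx
    apply hIv i
    rw [Finset.mem_inter]
    simp only [hP, Finset.mem_image, Finset.mem_filter, Finset.mem_univ, true_and] at hx ⊢
    obtain ⟨j, hj, rfl⟩ := hx
    exact ⟨⟨j, Fin.lt_def.mpr hj, rfl⟩, ⟨j, rfl⟩⟩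
  have hvP : ∀ i : Fin m, v i ∉ P i := by
    intro i hx
    simp only [hP, Finset.mem_image, Finset.mem_filter, Finset.mem_univ, true_and] at hx
    obtain ⟨j, hj, hje⟩ := hx
    exact absurd (hv hje ▸ hj) (lt_irrefl _)
  have key : ∀ i : Fin m,
      f (insert (v i) (Iv i)) - f (Iv i) ≤ f (P (i + 1)) - f (P i) := by
    intro i
    rw [← hPsucc i]
    by_cases h : v i ∈ Iv i
    · rw [Finset.insert_eq_self.mpr h, sub_self]
      have := hf_mono (Finset.subset_insert (v i) (P i))
      linarith
    · exact hf_submod (hPsub i) (v i) h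
  calc ∑ i : Fin m, (f (insert (v i) (Iv i)) - f (Iv i))
      ≤ ∑ i : Fin m, (f (P (i + 1)) - f (P i)) := Finset.sum_le_sum fun i _ => key i
    _ = ∑ i ∈ Finset.range m, (f (P (i + 1)) - f (P i)) := by
        exact Fin.sum_univ_eq_sum_range (fun k => f (P (k + 1)) - f (P k)) m
    _ = f (P m) - f (P 0) := Finset.sum_range_sub (fun k => f (P k)) m
    _ ≤ f (Finset.univ.image v) := by rw [hPm, hP0, hf_norm, sub_zero]
end

section
/- Consider a randomized process that produces a finite sequence of items v_1, v_2, …, where the i-th item v_i is sampled from a (random, history-dependent) candidate set C_i with probability proportional to 1/val(v_i), i.e., with probability p_{v_i} = 1/(val(v_i)·z(C_i)) where z(C) = Σ_{u∈C} 1/val(u), and where every candidate set satisfies |C_i| ≥ d/ε. Let K̃ = {v_1, v_2, …} be the set of all sampled items and let D be a fixed set with |D| ≤ d, chosen independently of the randomness of the process. Then E[val(K̃ \ D)] ≥ (1 − ε)·E[val(K̃)], where val(S) = Σ_{u∈S} val(u). -/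
/-- The prefix of a history `h` of length `m`, consisting of its first `i`
coordinates. -/
def prefixOf {V : Type*} {m : ℕ} (h : Fin m → V) (i : Fin m) : Fin (i : ℕ) → V :=
  fun j => h ⟨j.1, j.2.trans i.2⟩

/-- Normalizing constant for sampling from `C` with probability proportional
to `1 / val`. -/
noncomputable def zC {V : Type*} (val : V → ℝ) (C : Finset V) : ℝ :=
  ∑ u ∈ C, 1 / val u

/-- The probability that a process which, at each step `i`, samples an item
from the (history-dependent) candidate set `C i` with probability proportional
to `1 / val`, produces exactly the history `h`. -/
noncomputable def histProb {V : Type*} [DecidableEq V] {m : ℕ}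
    (val : V → ℝ) (C : (i : Fin m) → (Fin (i : ℕ) → V) → Finset V)
    (h : Fin m → V) : ℝ :=
  ∏ i : Fin m,
    if h i ∈ C i (prefixOf h i) then
      1 / (val (h i) * zC val (C i (prefixOf h i)))
    else 0

section Aux

variable {V : Type*} [DecidableEq V] [Fintype V]

lemma zC_pos (val : V → ℝ) (hval : ∀ u : V, 0 < val u) {C : Finset V}
    (hC : C.Nonempty) : 0 < zC val C :=
  Finset.sum_pos (fun u _ => by have := hval u; positivity) hC

lemma prefixOf_cons_succ {m : ℕ} (v : V) (g : Fin m → V) (i : Fin m) :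
    prefixOf (Fin.cons v g) i.succ = Fin.cons v (prefixOf g i) := by
  funext j
  rcases j with ⟨jv, hj⟩
  cases jv with
  | zero => simp [prefixOf, Fin.cons]
  | succ k => rfl

lemma histProb_cons (val : V → ℝ) {m : ℕ}
    (C : (i : Fin (m+1)) → (Fin (i : ℕ) → V) → Finset V) (v : V) (g : Fin m → V) :
    histProb val C (Fin.cons v g) =
      (if v ∈ C 0 (prefixOf (Fin.cons v g) 0) then
          1 / (val v * zC val (C 0 (prefixOf (Fin.cons v g) 0))) else 0) *
      histProb val (fun i p => C i.succ (Fin.cons v p)) g := by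
  unfold histProb
  rw [Fin.prod_univ_succ]
  congr 1
  exact Finset.prod_congr rfl fun i _ => by rw [prefixOf_cons_succ, Fin.cons_succ]

lemma histProb_sum_one (val : V → ℝ) (hval : ∀ u : V, 0 < val u) :
    ∀ {m : ℕ} (C : (i : Fin m) → (Fin (i : ℕ) → V) → Finset V),
      (∀ (i : Fin m) (p : Fin (i : ℕ) → V), (C i p).Nonempty) →
      ∑ h : Fin m → V, histProb val C h = 1 := by
  intro m
  induction m with
  | zero =>
      intro C _
      rw [Fintype.sum_subsingleton _ (fun j => j.elim0)]
      simp [histProb]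
  | succ m ih =>
      intro C hC
      set z0 : Fin ((0 : Fin (m+1)) : ℕ) → V := fun j => absurd j.2 (by simp) with hz0
      have hpre0 : ∀ (h : Fin (m+1) → V), prefixOf h 0 = z0 :=
        fun h => funext fun j => absurd j.2 (by simp)
      have hz := zC_pos val hval (hC 0 z0)
      rw [← (Fin.consEquiv fun _ => V).sum_comp (histProb val C), Fintype.sum_prod_type]
      have hdec : ∀ (v : V) (g : Fin m → V),
          histProb val C ((Fin.consEquiv fun _ => V) (v, g)) =
            (if v ∈ C 0 z0 then 1 / (val v * zC val (C 0 z0)) else 0) *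
              histProb val (fun i p => C i.succ (Fin.cons v p)) g := by
        intro v g
        have e : ((Fin.consEquiv fun _ => V) (v, g)) = Fin.cons v g := rfl
        rw [e, histProb_cons, hpre0]
      calc ∑ v : V, ∑ g : Fin m → V, histProb val C ((Fin.consEquiv fun _ => V) (v, g))
          = ∑ v : V, (if v ∈ C 0 z0 then 1 / (val v * zC val (C 0 z0)) else 0) := by
            apply Finset.sum_congr rfl
            intro v _
            rw [Finset.sum_congr rfl (fun g _ => hdec v g), ← Finset.mul_sum,
              ih _ (fun i p => hC i.succ _), mul_one]
        _ = ∑ v ∈ C 0 z0, 1 / (val v * zC val (C 0 z0)) := by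
            rw [Finset.sum_ite_mem, Finset.univ_inter]
        _ = (∑ v ∈ C 0 z0, 1 / val v) / zC val (C 0 z0) := by
            rw [Finset.sum_div]
            exact Finset.sum_congr rfl fun v _ => by rw [div_div]
        _ = 1 := div_self hz.ne'

lemma sum_p0_nonneg (val : V → ℝ) (hval : ∀ u : V, 0 < val u) (Cs : Finset V)
    (hCs : Cs.Nonempty) (v : V) :
    0 ≤ (if v ∈ Cs then 1 / (val v * zC val Cs) else 0) := by
  split
  · have := hval v; have := zC_pos val hval hCs; positivity
  · exact le_rfl

lemma step_bound (val : V → ℝ) (hval : ∀ u : V, 0 < val u)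
    (d : ℕ) (ε : ℝ) (hε0 : 0 < ε) (D : Finset V) (hD : D.card ≤ d)
    (Cs : Finset V) (hCs : Cs.Nonempty) (hcard : (d : ℝ) / ε ≤ (Cs.card : ℝ)) :
    ∑ v : V, (if v ∈ Cs then 1 / (val v * zC val Cs) else 0) *
        (if v ∈ D then val v else 0)
      ≤ ε * ∑ v : V, (if v ∈ Cs then 1 / (val v * zC val Cs) else 0) * val v := by
  have hz := zC_pos val hval hCs
  have e1 : ∀ v : V,
      (if v ∈ Cs then 1 / (val v * zC val Cs) else 0) * (if v ∈ D then val v else 0)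
        = if v ∈ Cs ∩ D then 1 / zC val Cs else 0 := by
    intro v
    by_cases h1 : v ∈ Cs <;> by_cases h2 : v ∈ D <;>
      simp [h1, h2, Finset.mem_inter]
    have hv := (hval v).ne'
    field_simp
  have e2 : ∀ v : V,
      (if v ∈ Cs then 1 / (val v * zC val Cs) else 0) * val v
        = if v ∈ Cs then 1 / zC val Cs else 0 := by
    intro v
    by_cases h1 : v ∈ Cs <;> simp [h1]
    have hv := (hval v).ne'
    field_simp
  rw [Finset.sum_congr rfl (fun v _ => e1 v), Finset.sum_congr rfl (fun v _ => e2 v),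
    Finset.sum_ite_mem, Finset.sum_ite_mem, Finset.univ_inter, Finset.univ_inter,
    Finset.sum_const, Finset.sum_const, nsmul_eq_mul, nsmul_eq_mul]
  have h1 : ((Cs ∩ D).card : ℝ) ≤ (d : ℝ) := by
    exact_mod_cast le_trans (Finset.card_le_card Finset.inter_subset_right) hD
  have h2 : (d : ℝ) ≤ ε * Cs.card := by
    rw [div_le_iff₀ hε0] at hcard
    linarith [hcard]
  calc ((Cs ∩ D).card : ℝ) * (1 / zC val Cs)
      ≤ (ε * Cs.card) * (1 / zC val Cs) := by
        apply mul_le_mul_of_nonneg_right (le_trans h1 h2)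
        positivity
    _ = ε * ((Cs.card : ℝ) * (1 / zC val Cs)) := by ring

lemma key (val : V → ℝ) (hval : ∀ u : V, 0 < val u)
    (d : ℕ) (ε : ℝ) (hε0 : 0 < ε) (D : Finset V) (hD : D.card ≤ d) :
    ∀ {m : ℕ} (C : (i : Fin m) → (Fin (i : ℕ) → V) → Finset V),
      (∀ (i : Fin m) (p : Fin (i : ℕ) → V), (C i p).Nonempty) →
      (∀ (i : Fin m) (p : Fin (i : ℕ) → V), (d : ℝ) / ε ≤ ((C i p).card : ℝ)) →
      ∑ h : Fin m → V, histProb val C h * (∑ i, if h i ∈ D then val (h i) else 0)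
        ≤ ε * ∑ h : Fin m → V, histProb val C h * (∑ i, val (h i)) := by
  intro m
  induction m with
  | zero => intro C _ _; simp
  | succ m ih =>
      intro C hne hcard
      set z0 : Fin ((0 : Fin (m+1)) : ℕ) → V := fun j => absurd j.2 (by simp) with hz0
      have hpre0 : ∀ (h : Fin (m+1) → V), prefixOf h 0 = z0 :=
        fun h => funext fun j => absurd j.2 (by simp)
      set Cs : Finset V := C 0 z0 with hCs
      set p0 : V → ℝ := fun v => if v ∈ Cs then 1 / (val v * zC val Cs) else 0 with hp0def
      set C' : V → (i : Fin m) → (Fin (i : ℕ) → V) → Finset V :=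
        fun v i p => C i.succ (Fin.cons v p) with hC'
      have hdec : ∀ (v : V) (g : Fin m → V),
          histProb val C (Fin.cons v g) = p0 v * histProb val (C' v) g := by
        intro v g
        rw [histProb_cons, hpre0]
      have hmass : ∀ v : V, ∑ g : Fin m → V, histProb val (C' v) g = 1 :=
        fun v => histProb_sum_one val hval (C' v) (fun i p => hne i.succ _)
      have hp0 : ∀ v : V, 0 ≤ p0 v := sum_p0_nonneg val hval Cs (hne 0 z0)
      have hsum : ∀ (a : V → ℝ),
          ∑ h : Fin (m+1) → V, histProb val C h * (∑ i, a (h i))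
            = ∑ v : V, (p0 v * a v +
                p0 v * ∑ g : Fin m → V, histProb val (C' v) g * ∑ i, a (g i)) := by
        intro a
        rw [← (Fin.consEquiv fun _ => V).sum_comp
          (fun h => histProb val C h * ∑ i, a (h i)), Fintype.sum_prod_type]
        apply Finset.sum_congr rfl
        intro v _
        have e : ∀ g : Fin m → V,
            histProb val C ((Fin.consEquiv fun _ => V) (v, g)) *
                (∑ i, a (((Fin.consEquiv fun _ => V) (v, g)) i))
              = p0 v * a v * histProb val (C' v) g +
                p0 v * (histProb val (C' v) g * ∑ i, a (g i)) := by
          intro g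
          have e0 : ((Fin.consEquiv fun _ => V) (v, g)) = Fin.cons v g := rfl
          rw [e0, hdec, Fin.sum_univ_succ]
          simp only [Fin.cons_zero, Fin.cons_succ]
          ring
        rw [Finset.sum_congr rfl (fun g _ => e g), Finset.sum_add_distrib,
          ← Finset.mul_sum, ← Finset.mul_sum, hmass, mul_one]
      rw [hsum (fun u => if u ∈ D then val u else 0), hsum val,
        Finset.sum_add_distrib, Finset.sum_add_distrib, mul_add]
      apply add_le_add
      · exact step_bound val hval d ε hε0 D hD Cs (hne 0 z0) (hcard 0 z0)
      · rw [Finset.mul_sum]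
        apply Finset.sum_le_sum
        intro v _
        rw [show ε * (p0 v * ∑ g : Fin m → V, histProb val (C' v) g * ∑ i, val (g i))
            = p0 v * (ε * ∑ g : Fin m → V, histProb val (C' v) g * ∑ i, val (g i)) by ring]
        exact mul_le_mul_of_nonneg_left
          (ih (C' v) (fun i p => hne i.succ _) (fun i p => hcard i.succ _)) (hp0 v)

lemma histProb_inj (val : V → ℝ) {m : ℕ}
    (C : (i : Fin m) → (Fin (i : ℕ) → V) → Finset V)
    (hC_fresh : ∀ (i : Fin m) (h : Fin (i : ℕ) → V) (j : Fin (i : ℕ)), h j ∉ C i h)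
    {h : Fin m → V} (hne : histProb val C h ≠ 0) : Function.Injective h := by
  have hmem : ∀ i, h i ∈ C i (prefixOf h i) := by
    intro i
    by_contra hmemi
    apply hne
    unfold histProb
    apply Finset.prod_eq_zero (Finset.mem_univ i)
    simp [hmemi]
  have main : ∀ i j : Fin m, (j : ℕ) < (i : ℕ) → h i ≠ h j := by
    intro i j hlt heq
    have hnot : h j ∉ C i (prefixOf h i) := hC_fresh i (prefixOf h i) ⟨j.1, hlt⟩
    exact hnot (heq ▸ hmem i)
  intro i j heq
  rcases lt_trichotomy (i : ℕ) (j : ℕ) with hlt | heqn | hgt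
  · exact absurd heq.symm (main j i hlt)
  · exact Fin.ext heqn
  · exact absurd heq (main i j hgt)

end Aux

/-- **Robustness of inverse-proportional sampling.**  A randomized process
samples a finite sequence of distinct items `h 0, h 1, …`, the `i`-th item
being drawn from a (random, history-dependent) nonempty candidate set
`C i (prefixOf h i)` — which contains none of the previously sampled items —
with probability proportional to `1 / val`, where every candidate set has at
least `d / ε` items.  If `D` is a fixed set of at most `d` items, chosen
independently of the randomness of the process, then the set `K̃` of all
sampled items satisfies `E[val(K̃ \ D)] ≥ (1 − ε) · E[val(K̃)]`. -/
theorem sampled_set_robust_against_deletions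
    {V : Type*} [DecidableEq V] [Fintype V]
    (val : V → ℝ) (hval : ∀ u : V, 0 < val u)
    {m : ℕ} (C : (i : Fin m) → (Fin (i : ℕ) → V) → Finset V)
    (hC_ne : ∀ (i : Fin m) (h : Fin (i : ℕ) → V), (C i h).Nonempty)
    (hC_fresh : ∀ (i : Fin m) (h : Fin (i : ℕ) → V) (j : Fin (i : ℕ)),
      h j ∉ C i h)
    (d : ℕ) (ε : ℝ) (hε0 : 0 < ε) (hε1 : ε < 1)
    (hC_card : ∀ (i : Fin m) (h : Fin (i : ℕ) → V),
      (d : ℝ) / ε ≤ ((C i h).card : ℝ))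
    (D : Finset V) (hD : D.card ≤ d) :
    (1 - ε) * ∑ h : Fin m → V, histProb val C h *
        ∑ u ∈ Finset.image h Finset.univ, val u
      ≤ ∑ h : Fin m → V, histProb val C h *
          ∑ u ∈ Finset.image h Finset.univ \ D, val u := by
  have key' := key val hval d ε hε0 D hD C hC_ne hC_card
  have hBeq : ∀ h : Fin m → V,
      histProb val C h * ∑ u ∈ Finset.image h Finset.univ, val u
        = histProb val C h * ∑ i, val (h i) := by
    intro h
    rcases eq_or_ne (histProb val C h) 0 with h0 | h0
    · rw [h0]; ring
    · have hinj := histProb_inj val C hC_fresh h0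
      congr 1
      rw [Finset.sum_image (fun a _ b _ hab => hinj hab)]
  have hAeq : ∀ h : Fin m → V,
      histProb val C h * ∑ u ∈ Finset.image h Finset.univ \ D, val u
        = histProb val C h * (∑ i, val (h i))
          - histProb val C h * (∑ i, if h i ∈ D then val (h i) else 0) := by
    intro h
    rcases eq_or_ne (histProb val C h) 0 with h0 | h0
    · rw [h0]; ring
    · have hinj := histProb_inj val C hC_fresh h0
      rw [← mul_sub]
      congr 1
      rw [Finset.sdiff_eq_filter, Finset.sum_filter,
        Finset.sum_image (fun a _ b _ hab => hinj hab),
        ← Finset.sum_sub_distrib]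
      apply Finset.sum_congr rfl
      intro i _
      by_cases hm : h i ∈ D <;> simp [hm]
  rw [Finset.sum_congr rfl (fun h _ => hBeq h), Finset.sum_congr rfl (fun h _ => hAeq h),
    Finset.sum_sub_distrib]
  have hS := key'
  nlinarith [key']
end

section
/- Run the exchange streaming algorithm with threshold parameter γ > 0 on a stream of distinct items: it maintains a feasible solution I (initially empty) under a k-matroid constraint; for each processed item v with weight val(v) = f(v | I) and exchange set Sw, it replaces I by I + v − Sw whenever val(v) ≥ (1+γ)·val(Sw). Let S be the final solution and let K be the set of items that were at some point accepted into the tentative solution but later swapped out (so the set of all accepted items is K ∪ S). Then val(K) ≤ val(S)/γ, where val(X) = Σ_{u∈X} val(u). -/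
/-- A matroid on a finite ground set, given by its independent sets. -/
structure FinMatroid (V : Type*) [DecidableEq V] where
  Indep : Finset V → Prop
  empty_indep : Indep ∅
  indep_subset : ∀ ⦃X Y : Finset V⦄, X ⊆ Y → Indep Y → Indep X
  indep_aug : ∀ ⦃X Y : Finset V⦄, Indep X → Indep Y → X.card < Y.card →
    ∃ v ∈ Y, v ∉ X ∧ Indep (insert v X)

/-- `Sw` is a valid exchange set for the arriving item `v` with respect to the
current feasible solution `I` and weights `w`: it consists of, for each of the
`k` matroids in which `I + v` is not independent, a minimum-weight element `u`
of `I` such that `I + v - u` is independent in that matroid. -/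
def IsExchangeSet {V : Type*} [DecidableEq V] {k : ℕ} (M : Fin k → FinMatroid V)
    (w : V → ℝ) (I : Finset V) (v : V) (Sw : Finset V) : Prop :=
  ∃ u : Fin k → V,
    (∀ x : V, x ∈ Sw ↔ ∃ j : Fin k, ¬ (M j).Indep (insert v I) ∧ x = u j) ∧
    ∀ j : Fin k, ¬ (M j).Indep (insert v I) →
      u j ∈ I ∧ (M j).Indep (insert v (I.erase (u j))) ∧
        ∀ x ∈ I, (M j).Indep (insert v (I.erase x)) → w (u j) ≤ w x

/-- One step of the exchange streaming algorithm with threshold parameter `γ`,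
processing the arriving item `x`.  A state consists of the current feasible
solution together with the weight function `val`; the arriving item is assigned
weight `val x = f(x | I)`, and it is exchanged into the solution whenever
`val x ≥ (1+γ)·val(Sw)`. -/
def ExcStep {V : Type*} [DecidableEq V] {k : ℕ} (M : Fin k → FinMatroid V)
    (f : Finset V → ℝ) (γ : ℝ) (x : V)
    (s s' : Finset V × (V → ℝ)) : Prop :=
  s'.2 = Function.update s.2 x (f (insert x s.1) - f s.1) ∧
  ∃ Sw : Finset V, IsExchangeSet M s'.2 s.1 x Sw ∧
    (((1 + γ) * ∑ u ∈ Sw, s'.2 u ≤ s'.2 x ∧ s'.1 = insert x s.1 \ Sw) ∨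
      (s'.2 x < (1 + γ) * ∑ u ∈ Sw, s'.2 u ∧ s'.1 = s.1))

/-- Along any run of the exchange streaming algorithm with threshold parameter
`γ > 0` on a stream of distinct items, the set `K` of items that were at some
point accepted into the tentative solution but later swapped out (the union of
all tentative solutions minus the final solution `S`) satisfies
`val(K) ≤ val(S) / γ`. -/
theorem swapped_out_weight_le
    {V : Type*} [DecidableEq V] [Fintype V] {k : ℕ}
    (M : Fin k → FinMatroid V) (f : Finset V → ℝ) (γ : ℝ) (hγ : 0 < γ)
    (hf_norm : f ∅ = 0) (hf_nonneg : ∀ X : Finset V, 0 ≤ f X)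
    (hf_mono : ∀ ⦃X Y : Finset V⦄, X ⊆ Y → f X ≤ f Y)
    (hf_submod : ∀ ⦃X Y : Finset V⦄, X ⊆ Y → ∀ v ∉ Y,
      f (insert v Y) - f Y ≤ f (insert v X) - f X)
    (stream : List V) (h_nodup : stream.Nodup)
    (st : Fin (stream.length + 1) → Finset V × (V → ℝ))
    (h_init : (st 0).1 = ∅)
    (h_step : ∀ t : Fin stream.length,
      ExcStep M f γ (stream.get t) (st t.castSucc) (st t.succ)) :
    ∑ u ∈ (Finset.univ.biUnion fun t : Fin (stream.length + 1) => (st t).1) \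
        (st (Fin.last stream.length)).1, (st (Fin.last stream.length)).2 u
      ≤ (∑ u ∈ (st (Fin.last stream.length)).1, (st (Fin.last stream.length)).2 u) / γ := by

  classical
  have hinj : Function.Injective stream.get := List.nodup_iff_injective_get.mp h_nodup
  -- predicate: u was processed strictly before time i
  -- subset invariant: every element of the tentative solution at time i was processed before i
  have hsub : ∀ (i : ℕ) (hi : i ≤ stream.length),
      ∀ u ∈ (st ⟨i, Nat.lt_succ_of_le hi⟩).1,
        ∃ s : Fin stream.length, (s : ℕ) < i ∧ stream.get s = u := by
    intro i
    induction i with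
    | zero =>
      intro hi u hu
      have h00 : (⟨0, Nat.lt_succ_of_le hi⟩ : Fin (stream.length + 1)) = 0 := by
        ext; simp
      rw [h00, h_init] at hu
      simp at hu
    | succ i ih =>
      intro hi u hu
      have hi' : i < stream.length := hi
      obtain ⟨hupd, Sw, hex, hcase⟩ := h_step ⟨i, hi'⟩
      rcases hcase with ⟨hle, heq⟩ | ⟨hlt, heq⟩
      · have hu' : u ∈ insert (stream.get ⟨i, hi'⟩) (st ⟨i, Nat.lt_succ_of_le (le_of_lt hi')⟩).1 := by
          have := heq ▸ hu
          exact Finset.mem_sdiff.mp this |>.1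
        rcases Finset.mem_insert.mp hu' with rfl | hu''
        · exact ⟨⟨i, hi'⟩, Nat.lt_succ_self i, rfl⟩
        · obtain ⟨s, hs, hgs⟩ := ih (le_of_lt hi') u hu''
          exact ⟨s, Nat.lt_succ_of_lt hs, hgs⟩
      · have hu' : u ∈ (st ⟨i, Nat.lt_succ_of_le (le_of_lt hi')⟩).1 := heq ▸ hu
        obtain ⟨s, hs, hgs⟩ := ih (le_of_lt hi') u hu'
        exact ⟨s, Nat.lt_succ_of_lt hs, hgs⟩
  -- stability: the weight of an item processed before time i never changes after time i
  have hstab : ∀ (j : ℕ) (hj : j ≤ stream.length) (i : ℕ) (hij : i ≤ j)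
      (u : V), (∃ s : Fin stream.length, (s : ℕ) < i ∧ stream.get s = u) →
      (st ⟨j, Nat.lt_succ_of_le hj⟩).2 u = (st ⟨i, Nat.lt_succ_of_le (le_trans hij hj)⟩).2 u := by
    intro j
    induction j with
    | zero =>
      intro hj i hij u hu
      interval_cases i
      rfl
    | succ j ih =>
      intro hj i hij u hu
      rcases Nat.eq_or_lt_of_le hij with rfl | hlt
      · rfl
      · have hij' : i ≤ j := Nat.lt_succ_iff.mp hlt
        have hj' : j < stream.length := hj
        obtain ⟨hupd, _⟩ := h_step ⟨j, hj'⟩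
        have hne : u ≠ stream.get ⟨j, hj'⟩ := by
          obtain ⟨s, hs, rfl⟩ := hu
          intro h
          have := hinj h
          have : (s : ℕ) = j := congrArg Fin.val this
          omega
        have h1 : (st ⟨j + 1, Nat.lt_succ_of_le hj⟩).2 u
            = (st ⟨j, Nat.lt_succ_of_le (le_of_lt hj')⟩).2 u := by
          have : (st ⟨j + 1, Nat.lt_succ_of_le hj⟩).2
              = Function.update (st ⟨j, Nat.lt_succ_of_le (le_of_lt hj')⟩).2
                  (stream.get ⟨j, hj'⟩)
                  (f (insert (stream.get ⟨j, hj'⟩) (st ⟨j, Nat.lt_succ_of_le (le_of_lt hj')⟩).1)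
                    - f (st ⟨j, Nat.lt_succ_of_le (le_of_lt hj')⟩).1) := hupd
          rw [this, Function.update_of_ne hne]
        rw [h1]
        exact ih (le_of_lt hj') i hij' u hu
  -- main invariant
  set w := (st (Fin.last stream.length)).2 with hwdef
  have main : ∀ (i : ℕ) (hi : i ≤ stream.length),
      γ * ∑ u ∈ ((Finset.univ.filter (fun s : Fin (stream.length + 1) => (s : ℕ) ≤ i)).biUnion
            fun s => (st s).1) \ (st ⟨i, Nat.lt_succ_of_le hi⟩).1, w u
        ≤ ∑ u ∈ (st ⟨i, Nat.lt_succ_of_le hi⟩).1, w u := by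
    intro i
    induction i with
    | zero =>
      intro hi
      have hB : ((Finset.univ.filter (fun s : Fin (stream.length + 1) => (s : ℕ) ≤ 0)).biUnion
          fun s => (st s).1) ⊆ (st ⟨0, Nat.lt_succ_of_le hi⟩).1 := by
        intro x hx
        obtain ⟨s, hs, hxs⟩ := Finset.mem_biUnion.mp hx
        have hs0 : (s : ℕ) ≤ 0 := (Finset.mem_filter.mp hs).2
        have : s = ⟨0, Nat.lt_succ_of_le hi⟩ := Fin.ext (Nat.le_zero.mp hs0)
        exact this ▸ hxs
      rw [Finset.sdiff_eq_empty_iff_subset.mpr hB]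
      simp only [Finset.sum_empty, mul_zero]
      have h00 : (⟨0, Nat.lt_succ_of_le hi⟩ : Fin (stream.length + 1)) = 0 := by
        ext; simp
      rw [h00, h_init]
      simp
    | succ i ih =>
      intro hi
      have hi' : i < stream.length := hi
      have hii : i ≤ stream.length := le_of_lt hi'
      set v := stream.get ⟨i, hi'⟩ with hv
      set I := (st ⟨i, Nat.lt_succ_of_le hii⟩).1 with hI
      set I' := (st ⟨i + 1, Nat.lt_succ_of_le hi⟩).1 with hI'
      set B : ℕ → Finset V := fun m =>
        (Finset.univ.filter (fun s : Fin (stream.length + 1) => (s : ℕ) ≤ m)).biUnion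
          fun s => (st s).1 with hBdef
      obtain ⟨hupd, Sw, hex, hcase⟩ := h_step ⟨i, hi'⟩
      -- Sw ⊆ I
      have hSwI : Sw ⊆ I := by
        obtain ⟨uf, hmem, hup⟩ := hex
        intro x hx
        obtain ⟨j, hind, rfl⟩ := (hmem x).mp hx
        exact (hup j hind).1
      -- I ⊆ B i
      have hIB : I ⊆ B i := by
        intro x hx
        refine Finset.mem_biUnion.mpr ⟨⟨i, Nat.lt_succ_of_le hii⟩, ?_, hx⟩
        simp
      -- elements of B i were processed before i
      have hBproc : ∀ x ∈ B i, ∃ s : Fin stream.length, (s : ℕ) < i + 1 ∧ stream.get s = x := by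
        intro x hx
        obtain ⟨s, hs, hxs⟩ := Finset.mem_biUnion.mp hx
        have hsi : (s : ℕ) ≤ i := (Finset.mem_filter.mp hs).2
        obtain ⟨s', hs', hgs'⟩ := hsub (s : ℕ) (le_trans hsi hii)
          x (by exact hxs)
        exact ⟨s', by omega, hgs'⟩
      -- v ∉ B i
      have hvB : v ∉ B i := by
        intro hvb
        obtain ⟨s, hs, hxs⟩ := Finset.mem_biUnion.mp hvb
        have hsi : (s : ℕ) ≤ i := (Finset.mem_filter.mp hs).2
        obtain ⟨s', hs', hgs'⟩ := hsub (s : ℕ) (le_trans hsi hii) v hxs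
        have : s' = ⟨i, hi'⟩ := hinj hgs'
        have : (s' : ℕ) = i := congrArg Fin.val this
        omega
      have hvI : v ∉ I := fun h => hvB (hIB h)
      -- B (i+1) = B i ∪ I'
      have hBsucc : B (i + 1) = B i ∪ I' := by
        ext x
        simp only [hBdef, Finset.mem_biUnion, Finset.mem_filter, Finset.mem_univ, true_and,
          Finset.mem_union]
        constructor
        · rintro ⟨s, hs, hxs⟩
          rcases Nat.lt_or_ge (s : ℕ) (i + 1) with h | h
          · exact Or.inl ⟨s, Nat.lt_succ_iff.mp h, hxs⟩
          · have hs' : s = ⟨i + 1, Nat.lt_succ_of_le hi⟩ := Fin.ext (le_antisymm hs h)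
            subst hs'
            exact Or.inr hxs
        · rintro (⟨s, hs, hxs⟩ | hx)
          · exact ⟨s, by omega, hxs⟩
          · exact ⟨⟨i + 1, Nat.lt_succ_of_le hi⟩, le_refl _, hx⟩
      -- final weights equal weights at time i+1 for processed items
      have hwv : w v = (st ⟨i + 1, Nat.lt_succ_of_le hi⟩).2 v := by
        have := hstab stream.length le_rfl (i + 1) hi v ⟨⟨i, hi'⟩, Nat.lt_succ_self i, rfl⟩
        simpa [hwdef, Fin.last] using this
      have hwSw : ∀ x ∈ Sw, w x = (st ⟨i + 1, Nat.lt_succ_of_le hi⟩).2 x := by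
        intro x hx
        obtain ⟨s, hs, hgs⟩ := hsub i hii x (hSwI hx)
        have := hstab stream.length le_rfl (i + 1) hi x ⟨s, by omega, hgs⟩
        simpa [hwdef, Fin.last] using this
      rcases hcase with ⟨hle, heq⟩ | ⟨hlt, heq⟩
      · -- accept case
        show γ * ∑ u ∈ B (i + 1) \ I', w u ≤ ∑ u ∈ I', w u
        have heq' : I' = insert v I \ Sw := heq
        -- key inequality in terms of w
        have hkey : (1 + γ) * ∑ u ∈ Sw, w u ≤ w v := by
          rw [hwv, Finset.sum_congr rfl hwSw]
          exact hle
        -- B (i+1) \ I' = (B i \ I) ∪ Sw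
        have hK : B (i + 1) \ I' = (B i \ I) ∪ Sw := by
          rw [hBsucc, heq']
          ext x
          constructor
          · intro hx
            obtain ⟨hx1, hx2⟩ := Finset.mem_sdiff.mp hx
            by_cases hxSw : x ∈ Sw
            · exact Finset.mem_union_right _ hxSw
            · have hxB : x ∈ B i := by
                rcases Finset.mem_union.mp hx1 with h | h
                · exact h
                · exact absurd h hx2
              have hxI : x ∉ I := fun hxI =>
                hx2 (Finset.mem_sdiff.mpr ⟨Finset.mem_insert_of_mem hxI, hxSw⟩)
              exact Finset.mem_union_left _ (Finset.mem_sdiff.mpr ⟨hxB, hxI⟩)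
          · intro hx
            rcases Finset.mem_union.mp hx with h | h
            · obtain ⟨hx1, hx2⟩ := Finset.mem_sdiff.mp h
              refine Finset.mem_sdiff.mpr ⟨Finset.mem_union_left _ hx1, ?_⟩
              intro hc
              obtain ⟨hc1, hc2⟩ := Finset.mem_sdiff.mp hc
              rcases Finset.mem_insert.mp hc1 with rfl | hc3
              · exact hvB hx1
              · exact hx2 hc3
            · refine Finset.mem_sdiff.mpr
                ⟨Finset.mem_union_left _ (hIB (hSwI h)), ?_⟩
              intro hc
              exact (Finset.mem_sdiff.mp hc).2 h
        have hdisj : Disjoint (B i \ I) Sw :=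
          Finset.disjoint_left.mpr (fun x hx hxSw =>
            (Finset.mem_sdiff.mp hx).2 (hSwI hxSw))
        have hsumK : ∑ u ∈ B (i + 1) \ I', w u = ∑ u ∈ B i \ I, w u + ∑ u ∈ Sw, w u := by
          rw [hK, Finset.sum_union hdisj]
        have hSwins : Sw ⊆ insert v I := fun x hx => Finset.mem_insert_of_mem (hSwI hx)
        have hsumI : ∑ u ∈ I', w u = w v + ∑ u ∈ I, w u - ∑ u ∈ Sw, w u := by
          rw [heq', Finset.sum_sdiff_eq_sub hSwins, Finset.sum_insert hvI]
        rw [hsumK, hsumI]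
        have ihi := ih hii
        have hγSw : γ * ∑ u ∈ Sw, w u ≤ w v - ∑ u ∈ Sw, w u := by nlinarith
        nlinarith [ihi]
      · -- reject case
        show γ * ∑ u ∈ B (i + 1) \ I', w u ≤ ∑ u ∈ I', w u
        have heq' : I' = I := heq
        have hBeq : B (i + 1) = B i := by
          rw [hBsucc, heq']
          exact Finset.union_eq_left.mpr hIB
        rw [hBeq, heq']
        exact ih hii
  -- conclude
  have hlast := main stream.length le_rfl
  have hBall : (Finset.univ.filter
      (fun s : Fin (stream.length + 1) => (s : ℕ) ≤ stream.length)) = Finset.univ := by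
    apply Finset.filter_true_of_mem
    intro s _
    exact Nat.lt_succ_iff.mp s.isLt
  rw [hBall] at hlast
  have hfin : (⟨stream.length, Nat.lt_succ_of_le le_rfl⟩ : Fin (stream.length + 1))
      = Fin.last stream.length := rfl
  rw [hfin] at hlast
  rw [le_div_iff₀ hγ]
  linarith [hlast]
end
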